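/- arXiv:1902.03694 — 2 statements merged into one kernel-verified Lean document; each statement's English description precedes it below -/
import Mathlib

section
/- Let 0 < μ ≤ L, let f be μ-strongly convex with L-Lipschitz gradient on ℝⁿ, with minimizer x⋆, and take step size s = μ/(16L²). Then the iterates of the symplectic Euler scheme for the high-resolution heavy-ball ODE satisfy, for every k ≥ 0, f(x_k) − f(x⋆) ≤ 3L‖x₀ − x⋆‖² / (1 + μ/(16L))^k. -/
/-!
A Lyapunov argument. With `q = √μ` and `r = √(μs) = μ/(4L)`, the energy `E_k` of
`heavyBallEnergy` dominates `f x_k - f x⋆`, starts below `3L‖x₀ - x⋆‖²`, and contracts: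
`(1 + r/4) E_{k+1} ≤ E_k`. The contraction combines strong convexity between `x_{k+1}` and
both `x_k` and `x⋆` with `‖∇f‖² ≤ 4L (f - f x⋆)`, a consequence of the descent inequality for an
`L`-Lipschitz gradient.
-/

open scoped RealInnerProductSpace

section Smooth
variable {E : Type*} [NormedAddCommGroup E] [InnerProductSpace ℝ E] [CompleteSpace E]
  {f : E → ℝ} {f' : E → E} {L : ℝ}

theorem IsLocalMin.hasGradientAt_eq_zero {g x : E} (h : IsLocalMin f x)
    (hf : HasGradientAt f g x) : g = 0 := by
  simpa using h.hasFDerivAt_eq_zero hf.hasFDerivAt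

theorem le_add_inner_add_mul_norm_sq_of_lipschitz (hL : 0 ≤ L)
    (hgrad : ∀ z, HasGradientAt f (f' z) z) (hLip : ∀ z w, ‖f' z - f' w‖ ≤ L * ‖z - w‖)
    (z w : E) : f w ≤ f z + ⟪f' z, w - z⟫ + L * ‖w - z‖ ^ 2 := by
  have hw : w ∈ Metric.closedBall z ‖w - z‖ := by simp [dist_eq_norm]
  have key := (convex_closedBall z ‖w - z‖).norm_image_sub_le_of_norm_hasFDerivWithin_le'
    (fun u _ => (hgrad u).hasFDerivAt.hasFDerivWithinAt)
    (φ := InnerProductSpace.toDual ℝ E (f' z)) (C := L * ‖w - z‖) (fun u hu => ?_) (Metric.mem_closedBall_self (norm_nonneg _)) hw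
  · rw [InnerProductSpace.toDual_apply_apply, Real.norm_eq_abs] at key
    linarith [le_abs_self (f w - f z - ⟪f' z, w - z⟫)]
  · rw [← map_sub, LinearIsometryEquiv.norm_map]
    exact (hLip u z).trans (mul_le_mul_of_nonneg_left (mem_closedBall_iff_norm.1 hu) hL)

theorem norm_sq_le_of_lipschitz_gradient (hL : 0 < L)
    (hgrad : ∀ z, HasGradientAt f (f' z) z) (hLip : ∀ z w, ‖f' z - f' w‖ ≤ L * ‖z - w‖)
    {xstar : E} (hmin : ∀ z, f xstar ≤ f z) (z : E) :
    ‖f' z‖ ^ 2 ≤ 4 * L * (f z - f xstar) := by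
  have h := le_add_inner_add_mul_norm_sq_of_lipschitz hL.le hgrad hLip z (z - (2 * L)⁻¹ • f' z)
  rw [sub_sub_cancel_left, inner_neg_right, real_inner_smul_right, real_inner_self_eq_norm_sq,
    norm_neg, norm_smul, mul_pow, Real.norm_eq_abs, sq_abs] at h
  have hdec : ‖f' z‖ ^ 2 / (4 * L) ≤ f z - f xstar := by
    have := (hmin _).trans h
    field_simp at this ⊢
    linarith
  rwa [div_le_iff₀ (by positivity), mul_comm] at hdec

end Smooth

section Energy
variable {E : Type*} [NormedAddCommGroup E] [InnerProductSpace ℝ E]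

/-- `heavyBallEnergy r q (f x_k - f x⋆) v_k (x_{k+1} - x⋆)` is the energy `E_k`. -/
noncomputable def heavyBallEnergy (r q F : ℝ) (v y : E) : ℝ :=
  (1 + r) * F + ‖v‖ ^ 2 / 4 + ‖v + (2 * q) • y‖ ^ 2 / 4

theorem heavyBallEnergy_zero_le {a c q r L F : ℝ} {v G X : E} (hq : 0 ≤ q) (hr : r = q * a)
    (hrL : r = 4 * a ^ 2 * L) (hr4 : r ≤ 1 / 4) (hqL : q ^ 2 ≤ L) (hc : 0 ≤ c) (hca : c ≤ 2 * a)
    (hv : v = -(c • G)) (hF : 0 ≤ F) (hX : F + q ^ 2 / 2 * ‖X‖ ^ 2 ≤ ⟪G, X⟫)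
    (hG : ‖G‖ ≤ L * ‖X‖) :
    heavyBallEnergy r q F v (X + a • v) ≤ 3 * L * ‖X‖ ^ 2 := by
  have hL : 0 ≤ L := (sq_nonneg q).trans hqL
  have hr0 : 0 ≤ r := by rw [hrL]; positivity
  have hGX : ⟪G, X⟫ ≤ L * ‖X‖ ^ 2 := by
    nlinarith [real_inner_le_norm G X, norm_nonneg X]
  have hcG : c ^ 2 * ‖G‖ ^ 2 ≤ L / 4 * ‖X‖ ^ 2 := by
    have hGG : ‖G‖ ^ 2 ≤ L ^ 2 * ‖X‖ ^ 2 := by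
      rw [← mul_pow]; exact pow_le_pow_left₀ (norm_nonneg G) hG 2
    calc c ^ 2 * ‖G‖ ^ 2 ≤ (2 * a) ^ 2 * (L ^ 2 * ‖X‖ ^ 2) := by gcongr
      _ = r * L * ‖X‖ ^ 2 := by rw [hrL]; ring
      _ ≤ L / 4 * ‖X‖ ^ 2 := by gcongr; nlinarith
  have hW : v + (2 * q) • (X + a • v) = (1 + 2 * r) • v + (2 * q) • X := by rw [hr]; module
  unfold heavyBallEnergy
  rw [hW, hv]
  simp only [norm_neg, inner_neg_right, ← real_inner_self_eq_norm_sq, inner_add_left,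
    inner_add_right, real_inner_smul_right, real_inner_comm] at hX hGX hcG ⊢
  have hXX := real_inner_self_nonneg (x := X)
  -- `⟪v, X⟫ = -c ⟪G, X⟫ ≤ 0`: the cross term of `‖(1 + 2r) v + 2q X‖²` can be dropped.
  have hGX0 : 0 ≤ ⟪G, X⟫ := by nlinarith
  have h1r : (0 : ℝ) ≤ 1 + r := by positivity
  linarith [mul_le_mul_of_nonneg_left hX h1r, mul_le_mul_of_nonneg_left hGX h1r,
    mul_le_mul_of_nonneg_left hcG (by positivity : (0 : ℝ) ≤ (1 + (1 + 2 * r) ^ 2) / 4),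
    mul_nonneg (by positivity : (0 : ℝ) ≤ q * (1 + 2 * r) * c) hGX0,
    mul_le_mul_of_nonneg_right hqL hXX,
    mul_nonneg (mul_nonneg (by nlinarith : (0 : ℝ) ≤ 1 - r - (1 + (1 + 2 * r) ^ 2) / 16) hL) hXX,
    mul_nonneg (by positivity : (0 : ℝ) ≤ (1 + r) * q ^ 2 / 2) hXX]

/- Here `V = v_{k+1}`, `G = ∇f(x_{k+1})`, `X = x_{k+1} - x⋆`, and `hF₀` is strong convexity from
`x_{k+1}` to `x_k`. In `E_k - E_{k+1}` the `⟪G, V⟫` terms cancel against those of `hF₀`; the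
rest exceeds `r/4 · E_{k+1}` by `hX`, `hG` and `‖(1 + 2r) V - 2q X‖² ≥ 0`. -/
theorem heavyBallEnergy_succ_le {a q r F F₀ : ℝ} {v V G X : E} (hr : r = q * a) (hr0 : 0 ≤ r)
    (hr4 : r ≤ 1 / 4) (hF : 0 ≤ F) (hv : v = (1 + 2 * r) • V + (a * (1 + r)) • G)
    (hF₀ : F + ⟪G, -(a • v)⟫ + q ^ 2 / 2 * ‖-(a • v)‖ ^ 2 ≤ F₀)
    (hX : F + q ^ 2 / 2 * ‖X‖ ^ 2 ≤ ⟪G, X⟫) (hG : a ^ 2 * ‖G‖ ^ 2 ≤ r * F) :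
    (1 + r / 4) * heavyBallEnergy r q F V (X + a • V) ≤ heavyBallEnergy r q F₀ v X := by
  subst hv
  have hW : V + (2 * q) • (X + a • V) = (1 + 2 * r) • V + (2 * q) • X := by rw [hr]; module
  have hWk : (1 + 2 * r) • V + (a * (1 + r)) • G + (2 * q) • X
      = ((1 + 2 * r) • V + (2 * q) • X) + (a * (1 + r)) • G := by module
  have hv2 := real_inner_self_nonneg (x := (1 + 2 * r) • V + (a * (1 + r)) • G)
  have hyoung := real_inner_self_nonneg (x := (1 + 2 * r) • V - (2 * q) • X)
  have hVV := real_inner_self_nonneg (x := V)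
  have hXX := real_inner_self_nonneg (x := X)
  unfold heavyBallEnergy
  rw [hW, hWk]
  simp only [norm_neg, inner_neg_right, ← real_inner_self_eq_norm_sq, inner_add_left,
    inner_add_right, inner_sub_left, inner_sub_right, real_inner_smul_right, real_inner_comm]
    at hF₀ hX hG hv2 hyoung ⊢
  have h1r : (0 : ℝ) ≤ 1 + r := by positivity
  have h1 := mul_le_mul_of_nonneg_left hF₀ h1r
  have h2 := mul_le_mul_of_nonneg_left hX (mul_nonneg hr0 h1r)
  have h3 := mul_le_mul_of_nonneg_left hG (by positivity : (0 : ℝ) ≤ (1 + r) ^ 2 / 2)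
  have h4 := mul_nonneg (by positivity : (0 : ℝ) ≤ r / 16) hyoung
  have h5 := mul_nonneg (by positivity : (0 : ℝ) ≤ (1 + r) * r ^ 2 / 2) hv2
  have h6 := mul_nonneg (by nlinarith : (0 : ℝ) ≤ r * (1 + r) * (1 / 4 - r / 2)) hF
  have h7 := mul_nonneg (by nlinarith : (0 : ℝ) ≤ r + r ^ 2 - r / 16 - r * (1 + 2 * r) ^ 2 / 8) hVV
  have h8 := mul_nonneg (by positivity : (0 : ℝ) ≤ r ^ 2 * q ^ 2 / 2) hXX
  subst hr
  linarith

theorem le_heavyBallEnergy {r q F : ℝ} (hr : 0 ≤ r) (hF : 0 ≤ F) (v y : E) :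
    F ≤ heavyBallEnergy r q F v y := by
  unfold heavyBallEnergy
  nlinarith [sq_nonneg ‖v‖, sq_nonneg ‖v + (2 * q) • y‖]

end Energy

section Scheme
variable {E : Type*} [NormedAddCommGroup E] [InnerProductSpace ℝ E] {f : E → ℝ} {f' : E → E}
  {μ L a q r : ℝ} {xstar : E} {x v : ℕ → E}

theorem heavyBallEnergy_zero_le_of_scheme
    (hsc : ∀ z w, f w ≥ f z + ⟪f' z, w - z⟫ + μ / 2 * ‖w - z‖ ^ 2)
    (hmin : ∀ z, f xstar ≤ f z) (hLip : ∀ z w, ‖f' z - f' w‖ ≤ L * ‖z - w‖)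
    (hstar : f' xstar = 0) (hq0 : 0 ≤ q) (hq : q ^ 2 = μ) (hμL : μ ≤ L) (ha : 0 ≤ a)
    (hr : r = q * a) (hrL : r = 4 * a ^ 2 * L) (hr4 : r ≤ 1 / 4)
    (hx : x 1 - x 0 = a • v 0) (hv : v 0 = -((2 * a / (1 + r)) • f' (x 0))) :
    heavyBallEnergy r q (f (x 0) - f xstar) (v 0) (x 1 - xstar) ≤ 3 * L * ‖x 0 - xstar‖ ^ 2 := by
  have hy : x 1 - xstar = (x 0 - xstar) + a • v 0 := by rw [← hx]; abel
  have hr0 : 0 ≤ r := hr ▸ mul_nonneg hq0 ha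
  rw [hy]
  refine heavyBallEnergy_zero_le hq0 hr hrL hr4 (hq ▸ hμL) (by positivity) ?_ hv
    (sub_nonneg.2 (hmin _)) ?_ ?_
  · rw [div_le_iff₀ (by positivity)]; nlinarith
  · have h := hsc (x 0) xstar
    rw [← neg_sub, inner_neg_right, norm_neg, ← hq] at h
    linarith
  · simpa [hstar] using hLip (x 0) xstar

theorem heavyBallEnergy_succ_le_of_scheme
    (hsc : ∀ z w, f w ≥ f z + ⟪f' z, w - z⟫ + μ / 2 * ‖w - z‖ ^ 2)
    (hmin : ∀ z, f xstar ≤ f z) (hG : ∀ z, a ^ 2 * ‖f' z‖ ^ 2 ≤ r * (f z - f xstar))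
    (hq : q ^ 2 = μ) (hr : r = q * a) (hr0 : 0 ≤ r) (hr4 : r ≤ 1 / 4)
    (hx : ∀ k, x (k + 1) - x k = a • v k)
    (hv : ∀ k, v (k + 1) - v k = -((2 * r) • v (k + 1)) - (a * (1 + r)) • f' (x (k + 1)))
    (k : ℕ) :
    (1 + r / 4) * heavyBallEnergy r q (f (x (k + 1)) - f xstar) (v (k + 1)) (x (k + 1 + 1) - xstar)
      ≤ heavyBallEnergy r q (f (x k) - f xstar) (v k) (x (k + 1) - xstar) := by
  have hy : x (k + 1 + 1) - xstar = (x (k + 1) - xstar) + a • v (k + 1) := by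
    rw [← hx (k + 1)]; abel
  rw [hy]
  refine heavyBallEnergy_succ_le hr hr0 hr4 (sub_nonneg.2 (hmin _)) ?_ ?_ ?_ (hG _)
  · linear_combination (norm := module) -(hv k)
  · have h := hsc (x (k + 1)) (x k)
    rw [show x k - x (k + 1) = -(a • v k) by rw [← hx k]; abel, ← hq] at h
    linarith
  · have h := hsc (x (k + 1)) xstar
    rw [← neg_sub, inner_neg_right, norm_neg, ← hq] at h
    linarith

end Scheme

theorem sqrt_mul_div_sq_eq {μ L : ℝ} (hμ : 0 ≤ μ) (hL : 0 < L) :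
    √(μ * (μ / (16 * L ^ 2))) = μ / (4 * L) := by
  rw [show μ * (μ / (16 * L ^ 2)) = (μ / (4 * L)) ^ 2 by field_simp; ring]
  exact Real.sqrt_sq (by positivity)

theorem stmt3
    {n : ℕ} (μ L : ℝ) (hμ : 0 < μ) (hμL : μ ≤ L)
    (f : EuclideanSpace ℝ (Fin n) → ℝ)
    (f' : EuclideanSpace ℝ (Fin n) → EuclideanSpace ℝ (Fin n))
    (hgrad : ∀ z, HasGradientAt f (f' z) z)
    (hLip : ∀ z w, ‖f' z - f' w‖ ≤ L * ‖z - w‖)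
    (hsc : ∀ z w, f w ≥ f z + ⟪f' z, w - z⟫ + μ / 2 * ‖w - z‖ ^ 2)
    (xstar : EuclideanSpace ℝ (Fin n)) (hmin : ∀ z, f xstar ≤ f z)
    (s : ℝ) (hs : s = μ / (16 * L ^ 2))
    (x v : ℕ → EuclideanSpace ℝ (Fin n))
    (hv0 : v 0 = -((2 * Real.sqrt s / (1 + Real.sqrt (μ * s))) • f' (x 0)))
    (hx : ∀ k : ℕ, x (k + 1) - x k = Real.sqrt s • v k)
    (hv : ∀ k : ℕ, v (k + 1) - v k = -((2 * Real.sqrt (μ * s)) • v (k + 1))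
      - (Real.sqrt s * (1 + Real.sqrt (μ * s))) • f' (x (k + 1)))
    : ∀ k : ℕ, f (x k) - f xstar ≤ 3 * L * ‖x 0 - xstar‖ ^ 2 / (1 + μ / (16 * L)) ^ k := by
  have hL : 0 < L := hμ.trans_le hμL
  subst hs
  set a := √(μ / (16 * L ^ 2))
  set r := √(μ * (μ / (16 * L ^ 2)))
  have hrμ : r = μ / (4 * L) := sqrt_mul_div_sq_eq hμ.le hL
  have hr : r = √μ * a := Real.sqrt_mul hμ.le _
  have hrL : r = 4 * a ^ 2 * L := by
    rw [Real.sq_sqrt (by positivity), hrμ]; field_simp; ring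
  have hr0 : 0 ≤ r := Real.sqrt_nonneg _
  have hr4 : r ≤ 1 / 4 := by rw [hrμ, div_le_iff₀ (by positivity)]; linarith
  have hq := Real.sq_sqrt hμ.le
  have hstar := IsLocalMin.hasGradientAt_eq_zero (Filter.Eventually.of_forall hmin) (hgrad xstar)
  have hG (z) : a ^ 2 * ‖f' z‖ ^ 2 ≤ r * (f z - f xstar) :=
    (mul_le_mul_of_nonneg_left (norm_sq_le_of_lipschitz_gradient hL hgrad hLip hmin z)
      (sq_nonneg a)).trans_eq (by rw [hrL]; ring)
  set En := fun k => heavyBallEnergy r √μ (f (x k) - f xstar) (v k) (x (k + 1) - xstar)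
  have h0 : En 0 ≤ 3 * L * ‖x 0 - xstar‖ ^ 2 :=
    heavyBallEnergy_zero_le_of_scheme hsc hmin hLip hstar (Real.sqrt_nonneg _) hq hμL
      (Real.sqrt_nonneg _) hr hrL hr4 (hx 0) hv0
  have hstep (k) : En (k + 1) ≤ (1 + r / 4)⁻¹ * En k := by
    rw [le_inv_mul_iff₀ (by positivity)]
    exact heavyBallEnergy_succ_le_of_scheme hsc hmin hG hq hr hr0 hr4 hx hv k
  intro k
  calc f (x k) - f xstar ≤ En k := le_heavyBallEnergy hr0 (sub_nonneg.2 (hmin _)) _ _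
    _ ≤ (1 + r / 4)⁻¹ ^ k * En 0 := le_geom (by positivity) k fun k _ => hstep k
    _ ≤ 3 * L * ‖x 0 - xstar‖ ^ 2 / (1 + μ / (16 * L)) ^ k := by
      rw [inv_pow, ← div_eq_inv_mul, show 1 + r / 4 = 1 + μ / (16 * L) by rw [hrμ]; ring]
      gcongr
end

section
/- Let 0 < μ ≤ L, let f be μ-strongly convex with L-Lipschitz gradient on ℝⁿ, with minimizer x⋆, and let 0 < s ≤ μ/(100L²). Then the iterates of the explicit Euler scheme for the high-resolution NAG-SC ODE satisfy, for every k ≥ 0, f(x_k) − f(x⋆) ≤ ( (3 − 2√(μs) + μs)/(2 + 4√(μs) + 2μs) · sL + 2μ/L + (1 + √(μs))/2 ) · L‖x₀ − x⋆‖² (1 − √(μs)/8)^k. -/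
/-!
Lyapunov argument. Along the scheme, the energy
`E_k = f(x_k) - f(x⋆) + ‖v_k‖²/4 + ‖v_k + 2√μ (x_k - x⋆) + √s ∇f(x_k)‖²/4`
contracts by the factor `1 - √(μs)/8` at each step once `s ≤ μ/(100L²)`: expanding `E_{k+1}`
exactly, the only terms that do not have a sign are controlled by the descent lemma, strong
convexity, the Lipschitz bound on `∇f(x_{k+1}) - ∇f(x_k)`, Young's inequality and
`‖∇f(x)‖² ≤ 2L (f(x) - f(x⋆))`. At `k = 0` the choice of `v₀` and `‖∇f(x₀)‖ ≤ L‖x₀ - x⋆‖` bound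
`E_0` by the constant of the statement, and `f(x_k) - f(x⋆) ≤ E_k`.
-/

open scoped RealInnerProductSpace

section Smooth

variable {H : Type*} [NormedAddCommGroup H] [InnerProductSpace ℝ H] [CompleteSpace H]
  {f : H → ℝ} {f' : H → H} {L : ℝ}

theorem le_add_inner_add_of_lipschitz_gradient (hgrad : ∀ z, HasGradientAt f (f' z) z)
    (hLip : ∀ z w, ‖f' z - f' w‖ ≤ L * ‖z - w‖) (z w : H) :
    f w ≤ f z + ⟪f' z, w - z⟫ + L / 2 * ‖w - z‖ ^ 2 := by
  obtain ⟨u, rfl⟩ : ∃ u, w = z + u := ⟨w - z, by abel⟩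
  rw [add_sub_cancel_left]
  let φ : ℝ → ℝ := fun t => f (z + t • u) - t * ⟪f' z, u⟫ - L / 2 * t ^ 2 * ‖u‖ ^ 2
  have hφ : ∀ t, HasDerivAt φ (⟪f' (z + t • u) - f' z, u⟫ - L * t * ‖u‖ ^ 2) t := by
    intro t
    have hline : HasDerivAt (fun t : ℝ => z + t • u) u t := by
      simpa using ((hasDerivAt_id t).smul_const u).const_add z
    have hf := (hgrad (z + t • u)).hasFDerivAt.comp_hasDerivAt t hline
    refine ((hf.sub ((hasDerivAt_id t).mul_const ⟪f' z, u⟫)).sub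
      (((hasDerivAt_pow 2 t).const_mul (L / 2)).mul_const (‖u‖ ^ 2))).congr_deriv ?_
    simp only [InnerProductSpace.toDual_apply_apply, inner_sub_left, Nat.cast_ofNat,
      Nat.add_one_sub_one, pow_one]
    ring
  have hanti : AntitoneOn φ (Set.Ici 0) := by
    refine antitoneOn_of_hasDerivWithinAt_nonpos (convex_Ici 0)
      (fun t _ => (hφ t).continuousAt.continuousWithinAt) (fun t _ => (hφ t).hasDerivWithinAt) ?_
    intro t ht
    rw [interior_Ici, Set.mem_Ioi] at ht
    have hlip : ‖f' (z + t • u) - f' z‖ ≤ L * (t * ‖u‖) := by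
      simpa [norm_smul, abs_of_pos ht] using hLip (z + t • u) z
    nlinarith [real_inner_le_norm (f' (z + t • u) - f' z) u,
      mul_le_mul_of_nonneg_right hlip (norm_nonneg u)]
  have h := hanti (Set.mem_Ici.2 le_rfl) (Set.mem_Ici.2 zero_le_one) zero_le_one
  simp only [φ, one_smul, zero_smul, add_zero] at h
  linarith

theorem norm_sq_le_two_mul_sub_of_lipschitz_gradient (hgrad : ∀ z, HasGradientAt f (f' z) z)
    (hLip : ∀ z w, ‖f' z - f' w‖ ≤ L * ‖z - w‖) (hL : 0 < L) {xstar : H}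
    (hmin : ∀ z, f xstar ≤ f z) (z : H) :
    ‖f' z‖ ^ 2 ≤ 2 * L * (f z - f xstar) := by
  have h := le_add_inner_add_of_lipschitz_gradient hgrad hLip z (z - L⁻¹ • f' z)
  rw [sub_sub_cancel_left, inner_neg_right, norm_neg, real_inner_smul_right,
    real_inner_self_eq_norm_sq, norm_smul, mul_pow, Real.norm_eq_abs, sq_abs] at h
  have hm := hmin (z - L⁻¹ • f' z)
  have : L * (L⁻¹ * ‖f' z‖ ^ 2) - L * (L / 2 * (L⁻¹ ^ 2 * ‖f' z‖ ^ 2)) = ‖f' z‖ ^ 2 / 2 := by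
    field_simp; ring
  nlinarith

theorem gradient_eq_zero_of_isMin {xstar : H} (hgrad : HasGradientAt f (f' xstar) xstar)
    (hmin : ∀ z, f xstar ≤ f z) : f' xstar = 0 := by
  have hloc : IsLocalMin f xstar := Filter.Eventually.of_forall hmin
  simpa using hloc.hasFDerivAt_eq_zero hgrad.hasFDerivAt

end Smooth

section Norms

variable {E : Type*} [SeminormedAddCommGroup E]

theorem norm_add_sq_le_two_mul (u v : E) : ‖u + v‖ ^ 2 ≤ 2 * (‖u‖ ^ 2 + ‖v‖ ^ 2) := by
  nlinarith [norm_add_le u v, norm_nonneg (u + v), sq_nonneg (‖u‖ - ‖v‖)]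

theorem norm_add_add_sq_le_three_mul (u v w : E) :
    ‖u + v + w‖ ^ 2 ≤ 3 * (‖u‖ ^ 2 + ‖v‖ ^ 2 + ‖w‖ ^ 2) := by
  nlinarith [norm_add₃_le (a := u) (b := v) (c := w), norm_nonneg (u + v + w),
    sq_nonneg (‖u‖ - ‖v‖), sq_nonneg (‖u‖ - ‖w‖), sq_nonneg (‖v‖ - ‖w‖)]

end Norms

section InnerProduct

variable {H : Type*} [NormedAddCommGroup H] [InnerProductSpace ℝ H]

theorem norm_smul_add_smul_add_smul_sq (α β γ : ℝ) (u v w : H) :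
    ‖α • u + β • v + γ • w‖ ^ 2 = α ^ 2 * ‖u‖ ^ 2 + β ^ 2 * ‖v‖ ^ 2 + γ ^ 2 * ‖w‖ ^ 2
      + 2 * α * β * ⟪u, v⟫ + 2 * α * γ * ⟪u, w⟫ + 2 * β * γ * ⟪v, w⟫ := by
  simp only [← real_inner_self_eq_norm_sq, inner_add_left, inner_add_right, real_inner_smul_left,
    real_inner_smul_right, real_inner_comm u v, real_inner_comm u w, real_inner_comm v w]
  ring

theorem two_mul_inner_le_mul_norm_sq_add_div {L : ℝ} (hL : 0 < L) (u v : H) :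
    2 * ⟪u, v⟫ ≤ L * ‖u‖ ^ 2 + ‖v‖ ^ 2 / L := by
  rw [← sub_nonneg]
  have : L * ‖u‖ ^ 2 + ‖v‖ ^ 2 / L - 2 * ⟪u, v⟫ = ‖√L • u - (√L)⁻¹ • v‖ ^ 2 := by
    rw [norm_sub_sq_real, norm_smul, norm_smul, real_inner_smul_left, real_inner_smul_right,
      Real.norm_eq_abs, Real.norm_eq_abs, abs_inv, abs_of_pos (Real.sqrt_pos.2 hL)]
    field_simp
    rw [Real.sq_sqrt hL.le]
    ring
  rw [this]
  positivity

theorem neg_inner_sub_le_of_lipschitz {f' : H → H} {L : ℝ}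
    (hLip : ∀ z w, ‖f' z - f' w‖ ≤ L * ‖z - w‖) (x y : H) :
    -⟪y - x, f' y - f' x⟫ ≤ L * ‖y - x‖ ^ 2 := by
  nlinarith [neg_le_of_abs_le (abs_real_inner_le_norm (y - x) (f' y - f' x)),
    mul_le_mul_of_nonneg_left (hLip y x) (norm_nonneg (y - x))]

theorem norm_add_smul_add_smul_sq_le {μ s : ℝ} (hμ : 0 ≤ μ) (hs : 0 ≤ s) (v y g : H) :
    ‖v + (2 * √μ) • y + √s • g‖ ^ 2 ≤ 3 * (‖v‖ ^ 2 + 4 * μ * ‖y‖ ^ 2 + s * ‖g‖ ^ 2) := by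
  have := norm_add_add_sq_le_three_mul v ((2 * √μ) • y) (√s • g)
  rwa [norm_smul, norm_smul, mul_pow, mul_pow, Real.norm_eq_abs, Real.norm_eq_abs, sq_abs,
    sq_abs, mul_pow, Real.sq_sqrt hμ, Real.sq_sqrt hs, show (2 : ℝ) ^ 2 = 4 by norm_num] at this

end InnerProduct

/-- The scalar core of one step, with `a = √(μs)`, `b = Ls`, `F` and `F'` the optimality gaps
before and after the step, `V = ‖v‖²`, `G = ‖∇f(x)‖²`, `R = ‖x - x⋆‖²`, `W` the square of the
mixed term of the energy, `P = √s⟪v, ∇f(x)⟫`, `Q = √s⟪v, d⟫`, `D = s‖d‖²`, `C = s⟪d, ∇f(x)⟫`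
where `d = ∇f(x') - ∇f(x)`, and `ρ = ⟪x - x⋆, ∇f(x)⟫`. -/
theorem lyapunov_decrease_of_bounds {a b s L μ F F' V G R D W P Q C ρ : ℝ}
    (ha : 0 < a) (hba : b ≤ a / 10) (hs : 0 < s) (hL : 0 < L) (hμL : μ ≤ L)
    (ha2 : a ^ 2 = μ * s) (hb : b = L * s)
    (hF : 0 ≤ F) (hV : 0 ≤ V) (hG : 0 ≤ G) (hR : 0 ≤ R)
    (hdesc : F' ≤ F + P + b / 2 * V) (hsc : F + μ / 2 * R ≤ ρ) (hGF : G ≤ 2 * L * F)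
    (hD : D ≤ b ^ 2 * V) (hQ : -Q ≤ b * V) (hC : 2 * C ≤ D + s * G) (hP : 2 * P ≤ b * V + G / L)
    (hW : W ≤ 3 * (V + 4 * μ * R + s * G)) :
    F' + ((1 - 2 * a) ^ 2 * V + D + (1 + a) ^ 2 * s * G - 2 * (1 - 2 * a) * Q
        - 2 * (1 - 2 * a) * (1 + a) * P + 2 * (1 + a) * C) / 4
      + (W - 2 * (1 + a) * (P + 2 * a * ρ + s * G) + (1 + a) ^ 2 * s * G) / 4
      ≤ (1 - a / 8) * (F + V / 4 + W / 4) := by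
  have hb0 : 0 ≤ b := hb ▸ (mul_pos hL hs).le
  have ha1 : a ≤ 1 / 10 := by nlinarith [mul_le_mul_of_nonneg_right hμL hs.le]
  have hGL : a ^ 2 * (G / L) ≤ s * G := by
    rw [ha2, mul_div_assoc', div_le_iff₀ hL]
    nlinarith [mul_le_mul_of_nonneg_right hμL (mul_nonneg hs.le hG)]
  have hcoefV : a / 8 - a + a ^ 2 + b / 2 + a ^ 2 * b / 2 + (1 - 2 * a) * b / 2
      + (2 + a) * b ^ 2 / 4 ≤ 0 := by
    nlinarith [mul_le_mul_of_nonneg_left hba ha.le, mul_le_mul_of_nonneg_left hba hb0,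
      mul_le_mul_of_nonneg_left hba (sq_nonneg a)]
  have hμ : 0 < μ := pos_of_mul_pos_left (ha2 ▸ pow_pos ha 2) hs.le
  have hcoefR : 3 * a / 8 * μ - a * (1 + a) * μ / 2 ≤ 0 := by
    nlinarith [mul_pos ha hμ, mul_pos (mul_pos ha ha) hμ]
  have hcoefF : a / 8 - a * (1 + a)
      + 2 * b * (a * (1 + a) / 2 + (1 + a) / 4 + 1 / 2 + 3 * a / 32) ≤ 0 := by
    nlinarith [mul_le_mul_of_nonneg_left hba ha.le, mul_le_mul_of_nonneg_left hba hb0,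
      mul_le_mul_of_nonneg_left hba (sq_nonneg a)]
  have hsG : s * G ≤ 2 * b * F := by rw [hb]; nlinarith [mul_le_mul_of_nonneg_left hGF hs.le]
  have h1a : 0 ≤ 1 - 2 * a := by linarith
  linarith [mul_le_mul_of_nonneg_left hP (sq_nonneg a), mul_le_mul_of_nonneg_left hQ h1a,
    mul_le_mul_of_nonneg_left hD (by positivity : (0 : ℝ) ≤ (2 + a) / 4),
    mul_le_mul_of_nonneg_left hC (by positivity : (0 : ℝ) ≤ (1 + a) / 4),
    mul_le_mul_of_nonneg_left hsc (by positivity : (0 : ℝ) ≤ a * (1 + a)),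
    mul_le_mul_of_nonneg_left hW (by positivity : (0 : ℝ) ≤ a / 32),
    mul_le_mul_of_nonneg_left hsG
      (by positivity : (0 : ℝ) ≤ a * (1 + a) / 2 + (1 + a) / 4 + 1 / 2 + 3 * a / 32),
    mul_nonpos_of_nonpos_of_nonneg hcoefV hV, mul_nonpos_of_nonpos_of_nonneg hcoefR hR,
    mul_nonpos_of_nonpos_of_nonneg hcoefF hF]

section Energy

variable {H : Type*} [NormedAddCommGroup H] [InnerProductSpace ℝ H]

noncomputable def nagscEnergy (f : H → ℝ) (f' : H → H) (xstar : H) (μ s : ℝ) (x v : H) : ℝ :=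
  f x - f xstar + ‖v‖ ^ 2 / 4 + ‖v + (2 * √μ) • (x - xstar) + √s • f' x‖ ^ 2 / 4

variable {f : H → ℝ} {f' : H → H} {xstar : H} {μ L s : ℝ}

theorem sub_le_nagscEnergy (x v : H) : f x - f xstar ≤ nagscEnergy f f' xstar μ s x v := by
  unfold nagscEnergy
  linarith [sq_nonneg ‖v‖, sq_nonneg ‖v + (2 * √μ) • (x - xstar) + √s • f' x‖]

theorem nagscEnergy_step_eq (hμ : 0 ≤ μ) (hs : 0 ≤ s) {x v x' v' : H} (hx : x' - x = √s • v)
    (hv : v' - v = -((2 * √(μ * s)) • v) - √s • (f' x' - f' x)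
      - (√s * (1 + √(μ * s))) • f' x) :
    nagscEnergy f f' xstar μ s x' v' = f x' - f xstar
      + ((1 - 2 * √(μ * s)) ^ 2 * ‖v‖ ^ 2 + s * ‖f' x' - f' x‖ ^ 2
        + (1 + √(μ * s)) ^ 2 * s * ‖f' x‖ ^ 2
        - 2 * (1 - 2 * √(μ * s)) * (√s * ⟪v, f' x' - f' x⟫)
        - 2 * (1 - 2 * √(μ * s)) * (1 + √(μ * s)) * (√s * ⟪v, f' x⟫)
        + 2 * (1 + √(μ * s)) * (s * ⟪f' x' - f' x, f' x⟫)) / 4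
      + (‖v + (2 * √μ) • (x - xstar) + √s • f' x‖ ^ 2
        - 2 * (1 + √(μ * s)) * (√s * ⟪v, f' x⟫ + 2 * √(μ * s) * ⟪x - xstar, f' x⟫
          + s * ‖f' x‖ ^ 2)
        + (1 + √(μ * s)) ^ 2 * s * ‖f' x‖ ^ 2) / 4 := by
  set σ := √s
  set a := √(μ * s)
  have hσ2 : σ ^ 2 = s := Real.sq_sqrt hs
  have hτσ : √μ * σ = a := (Real.sqrt_mul hμ s).symm
  set g := f' x
  set d := f' x' - f' x
  set w := v + (2 * √μ) • (x - xstar) + σ • g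
  have hv' : v' = (1 - 2 * a) • v + (-σ) • d + (-((1 + a) * σ)) • g := by
    rw [← sub_add_cancel v' v, hv]; module
  have hw' : v' + (2 * √μ) • (x' - xstar) + σ • f' x' = w - ((1 + a) * σ) • g := by
    rw [hv', show x' - xstar = σ • v + (x - xstar) by rw [← hx]; abel,
      show f' x' = d + g from (sub_add_cancel _ _).symm, ← hτσ]
    module
  have hnv : ‖v'‖ ^ 2 = (1 - 2 * a) ^ 2 * ‖v‖ ^ 2 + s * ‖d‖ ^ 2 + (1 + a) ^ 2 * s * ‖g‖ ^ 2
      - 2 * (1 - 2 * a) * (σ * ⟪v, d⟫) - 2 * (1 - 2 * a) * (1 + a) * (σ * ⟪v, g⟫)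
      + 2 * (1 + a) * (s * ⟪d, g⟫) := by
    rw [hv', norm_smul_add_smul_add_smul_sq, ← hσ2]
    ring
  have hnw : ‖w - ((1 + a) * σ) • g‖ ^ 2 = ‖w‖ ^ 2
      - 2 * (1 + a) * (σ * ⟪v, g⟫ + 2 * a * ⟪x - xstar, g⟫ + s * ‖g‖ ^ 2)
      + (1 + a) ^ 2 * s * ‖g‖ ^ 2 := by
    rw [norm_sub_sq_real, norm_smul, mul_pow, Real.norm_eq_abs, sq_abs, real_inner_smul_right]
    simp only [w, inner_add_left, real_inner_smul_left, real_inner_self_eq_norm_sq, ← hτσ, ← hσ2]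
    ring
  rw [nagscEnergy, hw', hnv, hnw]

theorem nagscEnergy_le_of_initial_velocity (hμ : 0 ≤ μ) (hs : 0 ≤ s) {x₀ v₀ : H}
    (hv₀ : v₀ = -((2 * √s / (1 + √(μ * s))) • f' x₀)) :
    nagscEnergy f f' xstar μ s x₀ v₀ ≤ f x₀ - f xstar
      + (3 - 2 * √(μ * s) + μ * s) / (2 + 4 * √(μ * s) + 2 * (μ * s)) * s * ‖f' x₀‖ ^ 2
      + 2 * μ * ‖x₀ - xstar‖ ^ 2 := by
  set a := √(μ * s)
  have ha : 0 ≤ a := Real.sqrt_nonneg _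
  have ha2 : a ^ 2 = μ * s := Real.sq_sqrt (mul_nonneg hμ hs)
  have hσ2 : √s ^ 2 = s := Real.sq_sqrt hs
  set g := f' x₀
  have hv : ‖v₀‖ ^ 2 / 4 = s / (1 + a) ^ 2 * ‖g‖ ^ 2 := by
    rw [hv₀, norm_neg, norm_smul, mul_pow, Real.norm_eq_abs, sq_abs, div_pow, mul_pow, hσ2]
    ring
  have hw₀ : v₀ + (2 * √μ) • (x₀ - xstar) + √s • g
      = ((a - 1) / (1 + a) * √s) • g + (2 * √μ) • (x₀ - xstar) := by
    rw [hv₀, show (a - 1) / (1 + a) * √s = √s - 2 * √s / (1 + a) by field_simp; ring]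
    module
  have hw := norm_add_sq_le_two_mul (((a - 1) / (1 + a) * √s) • g) ((2 * √μ) • (x₀ - xstar))
  rw [← hw₀, norm_smul, norm_smul, mul_pow, mul_pow, Real.norm_eq_abs, Real.norm_eq_abs, sq_abs,
    sq_abs, mul_pow, mul_pow, div_pow, hσ2, Real.sq_sqrt hμ] at hw
  have hκ : s / (1 + a) ^ 2 + (a - 1) ^ 2 / (1 + a) ^ 2 * s / 2
      = (3 - 2 * a + μ * s) / (2 + 4 * a + 2 * (μ * s)) * s := by
    rw [← ha2]
    field_simp
    ring
  unfold nagscEnergy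
  linear_combination hv + hw / 4 + hκ * ‖g‖ ^ 2

variable [CompleteSpace H]

theorem nagscEnergy_step_le (hgrad : ∀ z, HasGradientAt f (f' z) z)
    (hLip : ∀ z w, ‖f' z - f' w‖ ≤ L * ‖z - w‖)
    (hsc : ∀ z w, f w ≥ f z + ⟪f' z, w - z⟫ + μ / 2 * ‖w - z‖ ^ 2)
    (hmin : ∀ z, f xstar ≤ f z) (hμ : 0 < μ) (hμL : μ ≤ L) (hs0 : 0 < s)
    (hLs : L * s ≤ √(μ * s) / 10) {x v x' v' : H} (hx : x' - x = √s • v)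
    (hv : v' - v = -((2 * √(μ * s)) • v) - √s • (f' x' - f' x)
      - (√s * (1 + √(μ * s))) • f' x) :
    nagscEnergy f f' xstar μ s x' v' ≤ (1 - √(μ * s) / 8) * nagscEnergy f f' xstar μ s x v := by
  have hL : 0 < L := hμ.trans_le hμL
  rw [nagscEnergy_step_eq hμ.le hs0.le hx hv, nagscEnergy]
  set σ := √s
  set g := f' x
  set d := f' x' - f' x
  have hσ2 : σ ^ 2 = s := Real.sq_sqrt hs0.le
  have hu : ‖x' - x‖ ^ 2 = s * ‖v‖ ^ 2 := by
    rw [hx, norm_smul, mul_pow, Real.norm_eq_abs, sq_abs, hσ2]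
  have hu_inner : ∀ y, ⟪x' - x, y⟫ = σ * ⟪v, y⟫ := fun y => by rw [hx, real_inner_smul_left]
  have hdesc : f x' - f xstar ≤ f x - f xstar + σ * ⟪v, g⟫ + L * s / 2 * ‖v‖ ^ 2 := by
    have := le_add_inner_add_of_lipschitz_gradient hgrad hLip x x'
    rw [real_inner_comm, hu_inner, hu] at this
    linarith
  have hstrong : f x - f xstar + μ / 2 * ‖x - xstar‖ ^ 2 ≤ ⟪x - xstar, g⟫ := by
    have := hsc x xstar
    rw [← neg_sub x xstar, inner_neg_right, norm_neg, real_inner_comm] at this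
    linarith
  have hD : s * ‖d‖ ^ 2 ≤ (L * s) ^ 2 * ‖v‖ ^ 2 := by
    have := pow_le_pow_left₀ (norm_nonneg d) (hLip x' x) 2
    rw [mul_pow, hu] at this
    nlinarith [mul_le_mul_of_nonneg_left this hs0.le]
  have hQ : -(σ * ⟪v, d⟫) ≤ L * s * ‖v‖ ^ 2 := by
    rw [← hu_inner, mul_assoc, ← hu]
    exact neg_inner_sub_le_of_lipschitz hLip x x'
  have hC : 2 * (s * ⟪d, g⟫) ≤ s * ‖d‖ ^ 2 + s * ‖g‖ ^ 2 := by
    linarith [mul_le_mul_of_nonneg_left (two_mul_inner_le_mul_norm_sq_add_div one_pos d g) hs0.le]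
  have hP : 2 * (σ * ⟪v, g⟫) ≤ L * s * ‖v‖ ^ 2 + ‖g‖ ^ 2 / L := by
    rw [← hu_inner, mul_assoc, ← hu]
    exact two_mul_inner_le_mul_norm_sq_add_div hL (x' - x) g
  have key := lyapunov_decrease_of_bounds (Real.sqrt_pos.2 (mul_pos hμ hs0)) hLs hs0 hL hμL
    (Real.sq_sqrt (mul_pos hμ hs0).le) rfl (sub_nonneg.2 (hmin x)) (sq_nonneg _) (sq_nonneg _)
    (sq_nonneg _) hdesc hstrong (norm_sq_le_two_mul_sub_of_lipschitz_gradient hgrad hLip hL hmin x)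
    hD hQ hC hP (norm_add_smul_add_smul_sq_le hμ.le hs0.le v (x - xstar) g)
  linarith

theorem nagscEnergy_initial_le (hgrad : ∀ z, HasGradientAt f (f' z) z)
    (hLip : ∀ z w, ‖f' z - f' w‖ ≤ L * ‖z - w‖) (hmin : ∀ z, f xstar ≤ f z)
    (hμ : 0 ≤ μ) (hL : 0 < L) (hs : 0 ≤ s) {x₀ v₀ : H}
    (hv₀ : v₀ = -((2 * √s / (1 + √(μ * s))) • f' x₀)) :
    nagscEnergy f f' xstar μ s x₀ v₀ ≤
      ((3 - 2 * √(μ * s) + μ * s) / (2 + 4 * √(μ * s) + 2 * (μ * s)) * (s * L)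
        + 2 * μ / L + (1 + √(μ * s)) / 2) * (L * ‖x₀ - xstar‖ ^ 2) := by
  set a := √(μ * s)
  have ha : 0 ≤ a := Real.sqrt_nonneg _
  set R := ‖x₀ - xstar‖ ^ 2
  have hgrad_star := gradient_eq_zero_of_isMin (hgrad xstar) hmin
  have hG : ‖f' x₀‖ ^ 2 ≤ L ^ 2 * R := by
    have := hLip x₀ xstar
    rw [hgrad_star, sub_zero] at this
    rw [← mul_pow]
    exact pow_le_pow_left₀ (norm_nonneg _) this 2
  have hF : f x₀ - f xstar ≤ L / 2 * R := by
    have := le_add_inner_add_of_lipschitz_gradient hgrad hLip xstar x₀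
    rw [hgrad_star, inner_zero_left] at this
    linarith
  have hκ : 0 ≤ (3 - 2 * a + μ * s) / (2 + 4 * a + 2 * (μ * s)) * s := by
    have : 0 ≤ 3 - 2 * a + μ * s := by
      nlinarith [Real.sq_sqrt (mul_nonneg hμ hs), sq_nonneg (a - 1)]
    positivity
  have hR : 0 ≤ L * R := by positivity
  calc nagscEnergy f f' xstar μ s x₀ v₀
      ≤ f x₀ - f xstar + (3 - 2 * a + μ * s) / (2 + 4 * a + 2 * (μ * s)) * s * ‖f' x₀‖ ^ 2
        + 2 * μ * R := nagscEnergy_le_of_initial_velocity hμ hs hv₀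
    _ ≤ L / 2 * R + (3 - 2 * a + μ * s) / (2 + 4 * a + 2 * (μ * s)) * s * (L ^ 2 * R)
        + 2 * μ * R := by linarith [mul_le_mul_of_nonneg_left hG hκ]
    _ ≤ _ := by
      field_simp
      nlinarith [mul_nonneg (mul_nonneg ha hR) (by positivity : 0 ≤ 2 + 4 * a + 2 * (μ * s))]

end Energy

theorem mul_le_sqrt_mul_div_ten {μ L s : ℝ} (hL : 0 < L) (hs : 0 ≤ s)
    (hsL : s ≤ μ / (100 * L ^ 2)) : L * s ≤ √(μ * s) / 10 := by
  have hsL' : s * (100 * L ^ 2) ≤ μ := (le_div_iff₀ (by positivity)).1 hsL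
  have hμ : 0 ≤ μ := le_trans (by positivity) hsL'
  rw [le_div_iff₀ (by norm_num), Real.le_sqrt (by positivity) (by positivity)]
  nlinarith [mul_le_mul_of_nonneg_left hsL' hs]

theorem stmt9
    {n : ℕ} (μ L : ℝ) (hμ : 0 < μ) (hμL : μ ≤ L)
    (f : EuclideanSpace ℝ (Fin n) → ℝ)
    (f' : EuclideanSpace ℝ (Fin n) → EuclideanSpace ℝ (Fin n))
    (hgrad : ∀ z, HasGradientAt f (f' z) z)
    (hLip : ∀ z w, ‖f' z - f' w‖ ≤ L * ‖z - w‖)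
    (hsc : ∀ z w, f w ≥ f z + ⟪f' z, w - z⟫ + μ / 2 * ‖w - z‖ ^ 2)
    (xstar : EuclideanSpace ℝ (Fin n)) (hmin : ∀ z, f xstar ≤ f z)
    (s : ℝ) (hs0 : 0 < s) (hs : s ≤ μ / (100 * L ^ 2))
    (x v : ℕ → EuclideanSpace ℝ (Fin n))
    (hv0 : v 0 = -((2 * Real.sqrt s / (1 + Real.sqrt (μ * s))) • f' (x 0)))
    (hx : ∀ k : ℕ, x (k + 1) - x k = Real.sqrt s • v k)
    (hv : ∀ k : ℕ, v (k + 1) - v k = -((2 * Real.sqrt (μ * s)) • v k)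
      - Real.sqrt s • (f' (x (k + 1)) - f' (x k))
      - (Real.sqrt s * (1 + Real.sqrt (μ * s))) • f' (x k))
    : ∀ k : ℕ, f (x k) - f xstar ≤
      ((3 - 2 * Real.sqrt (μ * s) + μ * s) / (2 + 4 * Real.sqrt (μ * s) + 2 * (μ * s)) * (s * L)
        + 2 * μ / L + (1 + Real.sqrt (μ * s)) / 2) *
      (L * ‖x 0 - xstar‖ ^ 2) * (1 - Real.sqrt (μ * s) / 8) ^ k := by
  intro k
  have hL : 0 < L := hμ.trans_le hμL
  have hLs := mul_le_sqrt_mul_div_ten hL hs0.le hs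
  have hrate : 0 ≤ 1 - √(μ * s) / 8 := by
    nlinarith [Real.sq_sqrt (mul_pos hμ hs0).le, mul_le_mul_of_nonneg_right hμL hs0.le]
  let E k := nagscEnergy f f' xstar μ s (x k) (v k)
  calc f (x k) - f xstar ≤ E k := sub_le_nagscEnergy (x k) (v k)
    _ ≤ (1 - √(μ * s) / 8) ^ k * E 0 := le_geom hrate k fun j _ =>
        nagscEnergy_step_le hgrad hLip hsc hmin hμ hμL hs0 hLs (hx j) (hv j)
    _ ≤ _ := by
      rw [mul_comm]
      exact mul_le_mul_of_nonneg_right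
        (nagscEnergy_initial_le hgrad hLip hmin hμ.le hL hs0.le hv0) (pow_nonneg hrate k)
end
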